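/- Define subsets of ℚ³: A₀ = [1,4)³; A₂ = the union over permutations of coordinates of {(r₁,r₂,r₃) : r₁ ∈ [0,∞), r₂ ∈ [−1/3, 0), r₃ ∈ [−2⌊−1/r₂⌋ − 1, −6)}; and A₃ = (the intersection over permutations of coordinates of the images of {(r₁,r₂,r₃) : r₁ < 0, r₂ < 0, r₃ ∈ [−2(⌊−1/r₁⌋ + ⌊−1/r₂⌋ + 1), 0)}) minus {(r₁,r₂,r₃) : all rᵢ ∈ [−6,0) and at least two rᵢ ∈ [−1,0)}. Then the set of integer triples (r₁,r₂,r₃) ∈ ℤ³ lying in A₀ ∪ A₂ ∪ A₃ consists exactly of: (i) triples with all rᵢ ∈ {1,2,3}; (ii) triples in which (in some order) one coordinate equals −1 and the other two lie in {−2,−3,−4}; and (iii) the triple (−2,−2,−2). -/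
import Mathlib



/-- The set A₀ = [1,4)³. -/
def A0 : Set (Fin 3 → ℚ) := {v | ∀ i, 1 ≤ v i ∧ v i < 4}

/-- Base region for A₂: r₁ ∈ [0,∞), r₂ ∈ [−1/3,0), r₃ ∈ [−2⌊−1/r₂⌋−1, −6). -/
def P2 (v : Fin 3 → ℚ) : Prop :=
  0 ≤ v 0 ∧ (-1/3 ≤ v 1 ∧ v 1 < 0) ∧
    (-2 * (⌊-1 / v 1⌋ : ℚ) - 1 ≤ v 2 ∧ v 2 < -6)

/-- A₂: union of the images of the base region under permutations of coordinates. -/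
def A2 : Set (Fin 3 → ℚ) := {v | ∃ σ : Equiv.Perm (Fin 3), P2 (v ∘ σ)}

/-- Base region for A₃: r₁ < 0, r₂ < 0, r₃ ∈ [−2(⌊−1/r₁⌋+⌊−1/r₂⌋+1), 0). -/
def P3 (v : Fin 3 → ℚ) : Prop :=
  v 0 < 0 ∧ v 1 < 0 ∧
    (-2 * ((⌊-1 / v 0⌋ : ℚ) + (⌊-1 / v 1⌋ : ℚ) + 1) ≤ v 2 ∧ v 2 < 0)

/-- A₃: intersection over permutations of the images of the base region, minus the
triples with all coordinates in [−6,0) and at least two coordinates in [−1,0). -/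
def A3 : Set (Fin 3 → ℚ) :=
  {v | ∀ σ : Equiv.Perm (Fin 3), P3 (v ∘ σ)} \
    {v | (∀ i, -6 ≤ v i ∧ v i < 0) ∧
      ∃ i j : Fin 3, i ≠ j ∧ (-1 ≤ v i ∧ v i < 0) ∧ (-1 ≤ v j ∧ v j < 0)}


def indm (n : ℤ) : ℤ := if n = -1 then 1 else 0

lemma indm_cases (n : ℤ) : indm n = 0 ∨ indm n = 1 := by
  unfold indm; split <;> simp

lemma indm_of_ne (n : ℤ) (h : n ≠ -1) : indm n = 0 := by simp [indm, h]
lemma indm_of_eq (n : ℤ) (h : n = -1) : indm n = 1 := by simp [indm, h]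

lemma floor_neg_one_div (n : ℤ) (hn : n < 0) : ⌊(-1 : ℚ) / (n : ℚ)⌋ = indm n := by
  unfold indm
  by_cases h : n = -1
  · subst h; norm_num
  · simp only [h, if_false]
    have h2 : n ≤ -2 := by omega
    have h2q : (n : ℚ) ≤ -2 := by exact_mod_cast h2
    have hpos : (0:ℚ) < -(n:ℚ) := by linarith
    have heq : (-1 : ℚ) / (n : ℚ) = 1 / (-(n:ℚ)) := by
      rw [neg_div, div_neg]
    rw [heq, Int.floor_eq_zero_iff]
    constructor
    · positivity
    · show 1 / (-(n:ℚ)) < 1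
      rw [div_lt_one hpos]; linarith

lemma perm_cover (σ : Equiv.Perm (Fin 3)) (i : Fin 3) : i = σ 0 ∨ i = σ 1 ∨ i = σ 2 := by
  have hd : ∀ j : Fin 3, j = 0 ∨ j = 1 ∨ j = 2 := by decide
  have key : ∀ k : Fin 3, σ.symm i = k → i = σ k := by
    intro k h
    have := congrArg σ h
    rwa [Equiv.apply_symm_apply] at this
  rcases hd (σ.symm i) with h | h | h
  · exact Or.inl (key 0 h)
  · exact Or.inr (Or.inl (key 1 h))
  · exact Or.inr (Or.inr (key 2 h))

lemma P3_int (w : Fin 3 → ℤ) :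
    P3 (fun i => ((w i : ℚ))) ↔
      (w 0 < 0 ∧ w 1 < 0 ∧ w 2 < 0 ∧ -2 * (indm (w 0) + indm (w 1) + 1) ≤ w 2) := by
  unfold P3
  constructor
  · rintro ⟨h0, h1, hbd, h2⟩
    simp only at h0 h1 hbd h2
    have h0' : w 0 < 0 := by exact_mod_cast h0
    have h1' : w 1 < 0 := by exact_mod_cast h1
    have h2' : w 2 < 0 := by exact_mod_cast h2
    refine ⟨h0', h1', h2', ?_⟩
    rw [floor_neg_one_div _ h0', floor_neg_one_div _ h1'] at hbd
    have : ((-2 * (indm (w 0) + indm (w 1) + 1) : ℤ) : ℚ) ≤ ((w 2 : ℤ) : ℚ) := by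
      push_cast; linarith
    exact_mod_cast this
  · rintro ⟨h0, h1, h2, hbd⟩
    refine ⟨show ((w 0:ℚ)) < 0 by exact_mod_cast h0, show ((w 1:ℚ)) < 0 by exact_mod_cast h1, ?_,
      show ((w 2:ℚ)) < 0 by exact_mod_cast h2⟩
    show -2 * ((⌊-1 / ((w 0 : ℚ))⌋ : ℚ) + (⌊-1 / ((w 1 : ℚ))⌋ : ℚ) + 1) ≤ ((w 2 : ℚ))
    rw [floor_neg_one_div _ h0, floor_neg_one_div _ h1]
    have : ((-2 * (indm (w 0) + indm (w 1) + 1) : ℤ) : ℚ) ≤ ((w 2 : ℤ) : ℚ) := by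
      exact_mod_cast hbd
    push_cast at this ⊢; linarith
lemma hd3 : ∀ j : Fin 3, j = 0 ∨ j = 1 ∨ j = 2 := by decide

theorem integer_points_of_exceptional_sets (v : Fin 3 → ℤ) :
    ((fun i => (v i : ℚ)) ∈ A0 ∪ A2 ∪ A3) ↔
      ((∀ i, v i ∈ ({1, 2, 3} : Set ℤ)) ∨
       (∃ σ : Equiv.Perm (Fin 3), v (σ 0) = -1 ∧
          v (σ 1) ∈ ({-2, -3, -4} : Set ℤ) ∧ v (σ 2) ∈ ({-2, -3, -4} : Set ℤ)) ∨
       (∀ i, v i = -2)) := by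
  have e1 : ∀ k : Fin 3, (1 : Equiv.Perm (Fin 3)) k = k := fun k => rfl
  have s02_0 : (Equiv.swap (0:Fin 3) 2) 0 = 2 := by decide
  have s02_1 : (Equiv.swap (0:Fin 3) 2) 1 = 1 := by decide
  have s02_2 : (Equiv.swap (0:Fin 3) 2) 2 = 0 := by decide
  have s12_0 : (Equiv.swap (1:Fin 3) 2) 0 = 0 := by decide
  have s12_1 : (Equiv.swap (1:Fin 3) 2) 1 = 2 := by decide
  have s12_2 : (Equiv.swap (1:Fin 3) 2) 2 = 1 := by decide
  have s01_0 : (Equiv.swap (0:Fin 3) 1) 0 = 1 := by decide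
  have s01_1 : (Equiv.swap (0:Fin 3) 1) 1 = 0 := by decide
  have s01_2 : (Equiv.swap (0:Fin 3) 1) 2 = 2 := by decide
  constructor
  · rintro ((hA0 | hA2) | hA3)
    · left
      intro i
      have h := hA0 i
      simp only at h
      have h1 : (1:ℤ) ≤ v i := by exact_mod_cast h.1
      have h2 : v i < 4 := by exact_mod_cast h.2
      simp only [Set.mem_insert_iff, Set.mem_singleton_iff]
      omega
    · exfalso
      obtain ⟨σ, hσ⟩ := hA2
      have h1 : (-1/3 : ℚ) ≤ (v (σ 1) : ℚ) := hσ.2.1.1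
      have h2 : (v (σ 1) : ℚ) < 0 := hσ.2.1.2
      have h2' : v (σ 1) < 0 := by exact_mod_cast h2
      have h3 : v (σ 1) ≤ -1 := by omega
      have h3' : (v (σ 1) : ℚ) ≤ -1 := by exact_mod_cast h3
      linarith
    · obtain ⟨hS, hT⟩ := hA3
      have key : ∀ σ : Equiv.Perm (Fin 3), v (σ 0) < 0 ∧ v (σ 1) < 0 ∧ v (σ 2) < 0 ∧
          -2 * (indm (v (σ 0)) + indm (v (σ 1)) + 1) ≤ v (σ 2) :=
        fun σ => (P3_int (v ∘ σ)).mp (hS σ)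
      obtain ⟨ha, hb, hc, B1⟩ := key 1
      simp only [e1] at ha hb hc B1
      obtain ⟨-, -, -, B2⟩ := key (Equiv.swap 0 2)
      rw [s02_0, s02_1, s02_2] at B2
      obtain ⟨-, -, -, B3⟩ := key (Equiv.swap 1 2)
      rw [s12_0, s12_1, s12_2] at B3
      -- exclusion helper
      have excl : ∀ i j : Fin 3, i ≠ j → v i = -1 → v j = -1 →
          (∀ k, -6 ≤ v k ∧ v k < 0) → False := by
        intro i j hij hi hj hbk
        apply hT
        constructor
        · intro k
          exact ⟨show (-6:ℚ) ≤ (v k:ℚ) by exact_mod_cast (hbk k).1,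
                 show (v k:ℚ) < 0 by exact_mod_cast (hbk k).2⟩
        · exact ⟨i, j, hij,
            ⟨show (-1:ℚ) ≤ (v i:ℚ) by exact_mod_cast (show (-1:ℤ) ≤ v i by omega),
             show (v i:ℚ) < 0 by exact_mod_cast (hbk i).2⟩,
            ⟨show (-1:ℚ) ≤ (v j:ℚ) by exact_mod_cast (show (-1:ℤ) ≤ v j by omega),
             show (v j:ℚ) < 0 by exact_mod_cast (hbk j).2⟩⟩
      by_cases h0 : v 0 = -1 <;> by_cases h1 : v 1 = -1 <;> by_cases h2 : v 2 = -1 <;>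
        simp only [indm, h0, h1, h2, if_true, if_false, if_pos, if_neg, not_false_iff,
          reduceIte] at B1 B2 B3
      · exact (excl 0 1 (by decide) h0 h1
          (fun k => by rcases hd3 k with rfl|rfl|rfl <;> omega)).elim
      · exact (excl 0 1 (by decide) h0 h1
          (fun k => by rcases hd3 k with rfl|rfl|rfl <;> omega)).elim
      · exact (excl 0 2 (by decide) h0 h2
          (fun k => by rcases hd3 k with rfl|rfl|rfl <;> omega)).elim
      · -- only v 0 = -1
        refine Or.inr (Or.inl ⟨1, ?_, ?_, ?_⟩) <;>
          simp only [e1, Set.mem_insert_iff, Set.mem_singleton_iff] <;> omega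
      · exact (excl 1 2 (by decide) h1 h2
          (fun k => by rcases hd3 k with rfl|rfl|rfl <;> omega)).elim
      · -- only v 1 = -1
        refine Or.inr (Or.inl ⟨Equiv.swap 0 1, ?_, ?_, ?_⟩) <;>
          simp only [s01_0, s01_1, s01_2, Set.mem_insert_iff, Set.mem_singleton_iff] <;> omega
      · -- only v 2 = -1
        refine Or.inr (Or.inl ⟨Equiv.swap 0 2, ?_, ?_, ?_⟩) <;>
          simp only [s02_0, s02_1, s02_2, Set.mem_insert_iff, Set.mem_singleton_iff] <;> omega
      · -- none
        refine Or.inr (Or.inr ?_)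
        intro i
        rcases hd3 i with rfl|rfl|rfl <;> omega
  · rintro (h | ⟨σ, h0, h1, h2⟩ | h)
    · refine Or.inl (Or.inl ?_)
      intro i
      have := h i
      simp only [Set.mem_insert_iff, Set.mem_singleton_iff] at this
      exact ⟨show (1:ℚ) ≤ (v i:ℚ) by exact_mod_cast (show (1:ℤ) ≤ v i by omega),
             show (v i:ℚ) < 4 by exact_mod_cast (show v i < 4 by omega)⟩
    · simp only [Set.mem_insert_iff, Set.mem_singleton_iff] at h1 h2
      have hval : ∀ i, v i = -1 ∨ (-4 ≤ v i ∧ v i ≤ -2) := by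
        intro i
        rcases perm_cover σ i with hh|hh|hh
        · rw [hh]; left; exact h0
        · rw [hh]; right; omega
        · rw [hh]; right; omega
      have honly : ∀ i, v i = -1 → i = σ 0 := by
        intro i hi
        rcases perm_cover σ i with hh|hh|hh
        · exact hh
        · exfalso; rw [hh] at hi; omega
        · exfalso; rw [hh] at hi; omega
      refine Or.inr ⟨fun σ' => ?_, ?_⟩
      · apply (P3_int (v ∘ σ')).mpr
        refine ⟨?_, ?_, ?_, ?_⟩
        · rcases hval (σ' 0) with hh|hh <;> simp only [Function.comp_apply] <;> omega
        · rcases hval (σ' 1) with hh|hh <;> simp only [Function.comp_apply] <;> omega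
        · rcases hval (σ' 2) with hh|hh <;> simp only [Function.comp_apply] <;> omega
        · show -2 * (indm (v (σ' 0)) + indm (v (σ' 1)) + 1) ≤ v (σ' 2)
          by_cases hA : v (σ' 0) = -1
          · rw [indm_of_eq _ hA]
            rcases indm_cases (v (σ' 1)) with hh|hh <;> rw [hh] <;>
              rcases hval (σ' 2) with h'|h' <;> omega
          · by_cases hB : v (σ' 1) = -1
            · rw [indm_of_ne _ hA, indm_of_eq _ hB]
              rcases hval (σ' 2) with h'|h' <;> omega
            · rw [indm_of_ne _ hA, indm_of_ne _ hB]
              have hσ02 : σ 0 = σ' 2 := by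
                rcases perm_cover σ' (σ 0) with hh|hh|hh
                · exact absurd (hh ▸ h0) hA
                · exact absurd (hh ▸ h0) hB
                · exact hh
              rw [← hσ02, h0]
              omega
      · rintro ⟨hall, i, j, hij, hi, hj⟩
        simp only at hi hj
        have hi' : v i = -1 := by
          have l : (-1:ℤ) ≤ v i := by exact_mod_cast hi.1
          have r : v i < 0 := by exact_mod_cast hi.2
          omega
        have hj' : v j = -1 := by
          have l : (-1:ℤ) ≤ v j := by exact_mod_cast hj.1
          have r : v j < 0 := by exact_mod_cast hj.2
          omega
        exact hij ((honly i hi').trans (honly j hj').symm)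
    · refine Or.inr ⟨fun σ' => ?_, ?_⟩
      · apply (P3_int (v ∘ σ')).mpr
        refine ⟨?_, ?_, ?_, ?_⟩ <;>
          simp only [Function.comp_apply, h (σ' 0), h (σ' 1), h (σ' 2)]
        · omega
        · omega
        · omega
        · show -2 * (indm (-2) + indm (-2) + 1) ≤ (-2 : ℤ)
          rw [indm_of_ne _ (by omega)]
          omega
      · rintro ⟨hall, i, j, hij, hi, hj⟩
        simp only at hi
        have l : (-1:ℤ) ≤ v i := by exact_mod_cast hi.1
        rw [h i] at l
        omega
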